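/- arXiv:1811.03475 — 6 statements merged into one kernel-verified Lean document; each statement's English description precedes it below -/
import Mathlib

section
/- For every real ν, the scaled Macdonald function ρ_ν satisfies the second-order differential equation d/dx [ x^{ν+1} · d/dx ( x^{-ν} ρ_ν(x) ) ] = ρ_ν(x) for all x > 0. -/
open MeasureTheory Real Set

/-- The scaled Macdonald function `ρ_ν(x) = ∫₀^∞ t^(ν-1) e^(-t - x/t) dt`. -/
noncomputable def rho (ν : ℝ) (x : ℝ) : ℝ :=
  ∫ t in Ioi (0:ℝ), t ^ (ν - 1) * Real.exp (-t - x / t)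

/-!
Differentiating under the integral sign gives `ρ_ν' = -ρ_{ν-1}`, and the substitution `t ↦ x / t`
gives the reflection formula `ρ_ν(x) = x^ν ρ_{-ν}(x)`. Hence `x^{-ν} ρ_ν = ρ_{-ν}` has derivative
`-ρ_{-ν-1}`; multiplied by `x^{ν+1}` this is `-ρ_{ν+1}` by reflection again, and the derivative of
`-ρ_{ν+1}` is `ρ_ν`.
-/

open Filter

theorem integral_comp_const_div_Ioi {E : Type*} [NormedAddCommGroup E] [NormedSpace ℝ E]
    (g : ℝ → E) {c : ℝ} (hc : 0 < c) :
    ∫ s in Ioi 0, (c / s ^ 2) • g (c / s) = ∫ t in Ioi 0, g t := by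
  have himage : (c / ·) '' Ioi 0 = Ioi (0 : ℝ) := by
    ext t
    refine ⟨?_, fun ht : 0 < t => ⟨c / t, div_pos hc ht, div_div_cancel₀ hc.ne'⟩⟩
    rintro ⟨s, hs : 0 < s, rfl⟩
    exact div_pos hc hs
  have hinj : InjOn (c / ·) (Ioi (0 : ℝ)) := fun s _ t _ hst => by
    simpa [div_eq_mul_inv, hc.ne'] using hst
  have hderiv (s : ℝ) (hs : s ∈ Ioi 0) :
      HasDerivWithinAt (c / ·) (-(c / s ^ 2)) (Ioi 0) s := by
    simpa [div_eq_mul_inv] using ((hasDerivAt_inv (ne_of_gt hs)).const_mul c).hasDerivWithinAt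
  have hsubst := integral_image_eq_integral_abs_deriv_smul measurableSet_Ioi hderiv hinj g
  rw [himage] at hsubst
  rw [hsubst]
  refine setIntegral_congr_fun measurableSet_Ioi fun s hs => ?_
  simp only [abs_neg, abs_of_pos (div_pos hc (pow_pos (mem_Ioi.mp hs) 2))]

theorem exp_neg_le_factorial_div_pow {y : ℝ} (hy : 0 < y) (n : ℕ) :
    exp (-y) ≤ n.factorial / y ^ n := by
  rw [exp_neg, inv_le_comm₀ (exp_pos y) (by positivity), inv_div]
  exact pow_div_factorial_le_exp _ hy.le n

theorem continuousOn_rpow_mul_exp_neg_sub_div (μ x : ℝ) :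
    ContinuousOn (fun t : ℝ => t ^ μ * exp (-t - x / t)) (Ioi 0) :=
  ContinuousOn.mul
    (fun t ht => (continuousAt_rpow_const t μ (.inl (ne_of_gt ht))).continuousWithinAt)
    (continuous_exp.comp_continuousOn
      (continuousOn_id.neg.sub (continuousOn_const.div continuousOn_id fun _ ht => ne_of_gt ht)))

theorem integrableOn_rpow_mul_exp_neg_sub_div (μ : ℝ) {x : ℝ} (hx : 0 < x) :
    IntegrableOn (fun t : ℝ => t ^ μ * exp (-t - x / t)) (Ioi 0) := by
  -- `exp (-x / t) ≤ n! (t / x)^n` absorbs the singularity of `t ^ μ` at `0`,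
  -- leaving a Gamma integrand.
  obtain ⟨n, hn⟩ := exists_nat_ge (-μ)
  have hGamma : IntegrableOn
      (fun t : ℝ => (n.factorial / x ^ n) * (exp (-t) * t ^ (μ + n + 1 - 1))) (Ioi 0) :=
    (GammaIntegral_convergent (by linarith)).const_mul _
  refine hGamma.mono'
    ((continuousOn_rpow_mul_exp_neg_sub_div μ x).aestronglyMeasurable measurableSet_Ioi) ?_
  filter_upwards [ae_restrict_mem measurableSet_Ioi] with t (ht : 0 < t)
  rw [norm_of_nonneg (by positivity)]
  calc t ^ μ * exp (-t - x / t) = t ^ μ * exp (-(x / t)) * exp (-t) := by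
        rw [mul_assoc, ← exp_add]; ring_nf
    _ ≤ t ^ μ * (n.factorial / (x / t) ^ n) * exp (-t) := by
        gcongr; exact exp_neg_le_factorial_div_pow (div_pos hx ht) n
    _ = (n.factorial / x ^ n) * (exp (-t) * t ^ (μ + n + 1 - 1)) := by
        rw [add_sub_cancel_right, rpow_add ht, rpow_natCast, div_pow]
        field_simp

theorem hasDerivAt_rho (ν : ℝ) {x : ℝ} (hx : 0 < x) :
    HasDerivAt (rho ν) (-rho (ν - 1) x) x := by
  have hderiv (t : ℝ) (ht : 0 < t) (y : ℝ) :
      HasDerivAt (fun y => t ^ (ν - 1) * exp (-t - y / t))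
        (-(t ^ (ν - 1 - 1) * exp (-t - y / t))) y := by
    refine ((((hasDerivAt_id y).div_const t).const_sub (-t)).exp.const_mul _).congr_deriv ?_
    rw [rpow_sub_one ht.ne' (ν - 1), id]
    field_simp
  have hbound (t : ℝ) (ht : 0 < t) (y : ℝ) (hy : y ∈ Metric.ball x (x / 2)) :
      ‖-(t ^ (ν - 1 - 1) * exp (-t - y / t))‖ ≤ t ^ (ν - 1 - 1) * exp (-t - (x / 2) / t) := by
    have hxy : x / 2 ≤ y := by linarith [(abs_lt.mp (mem_ball_iff_norm.mp hy)).1]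
    rw [norm_neg, norm_of_nonneg (by positivity)]
    gcongr
  have H := hasDerivAt_integral_of_dominated_loc_of_deriv_le (μ := volume.restrict (Ioi 0))
    (Metric.ball_mem_nhds x (half_pos hx))
    (Eventually.of_forall fun y => (continuousOn_rpow_mul_exp_neg_sub_div (ν - 1) y)
      |>.aestronglyMeasurable measurableSet_Ioi)
    (integrableOn_rpow_mul_exp_neg_sub_div (ν - 1) hx)
    ((continuousOn_rpow_mul_exp_neg_sub_div (ν - 1 - 1) x).neg.aestronglyMeasurable
      measurableSet_Ioi)
    ((ae_restrict_mem measurableSet_Ioi).mono fun t ht => hbound t ht)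
    (integrableOn_rpow_mul_exp_neg_sub_div (ν - 1 - 1) (half_pos hx))
    ((ae_restrict_mem measurableSet_Ioi).mono fun t ht y _ => hderiv t ht y)
  have hρ := H.2
  rw [integral_neg] at hρ
  exact hρ

theorem rho_eq_rpow_mul_rho_neg (ν : ℝ) {x : ℝ} (hx : 0 < x) :
    rho ν x = x ^ ν * rho (-ν) x := by
  rw [rho, ← integral_comp_const_div_Ioi _ hx, rho, ← integral_const_mul]
  refine setIntegral_congr_fun measurableSet_Ioi fun s (hs : 0 < s) => ?_
  have hpow : s ^ (-ν - 1) = (s ^ (ν - 1) * s ^ 2)⁻¹ := by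
    rw [← rpow_natCast, ← rpow_add hs, ← rpow_neg hs.le]
    ring_nf
  rw [smul_eq_mul, div_div_cancel₀ hx.ne', div_rpow hx.le hs.le, rpow_sub_one hx.ne', hpow,
    show -(x / s) - s = -s - x / s by ring]
  field_simp

theorem rpow_neg_mul_rho (ν : ℝ) {x : ℝ} (hx : 0 < x) : x ^ (-ν) * rho ν x = rho (-ν) x := by
  rw [rho_eq_rpow_mul_rho_neg ν hx, ← mul_assoc, ← rpow_add hx, neg_add_cancel, rpow_zero,
    one_mul]

theorem rho_ode (ν : ℝ) (x : ℝ) (hx : 0 < x) :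
    deriv (fun y : ℝ => y ^ (ν + 1) * deriv (fun z : ℝ => z ^ (-ν) * rho ν z) y) x
      = rho ν x := by
  have hinner : (fun y : ℝ => y ^ (ν + 1) * deriv (fun z : ℝ => z ^ (-ν) * rho ν z) y)
      =ᶠ[nhds x] -rho (ν + 1) := by
    filter_upwards [Ioi_mem_nhds hx] with y (hy : 0 < y)
    have hreflect : (fun z : ℝ => z ^ (-ν) * rho ν z) =ᶠ[nhds y] rho (-ν) := by
      filter_upwards [Ioi_mem_nhds hy] with z (hz : 0 < z) using rpow_neg_mul_rho ν hz
    rw [Pi.neg_apply, hreflect.deriv_eq, (hasDerivAt_rho (-ν) hy).deriv,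
      rho_eq_rpow_mul_rho_neg (ν + 1) hy, neg_add', mul_neg]
  rw [hinner.deriv_eq, deriv.neg, (hasDerivAt_rho (ν + 1) hx).deriv, neg_neg,
    add_sub_cancel_right]
end

section
/- Viskov-type identity for the Laguerre derivative: for every n ∈ ℕ and every smooth function f : (0,∞) → ℝ, applying n times the operator β, where (βf)(x) = d/dx ( x · f'(x) ), gives the same function as x ↦ d^n/dx^n ( x^n · f^{(n)}(x) ); that is, (D x D)^n f = D^n x^n D^n f, where D = d/dx. -/
open MeasureTheory Real Set

/-- The Laguerre derivative operator `β f = D (x · D f)`. -/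
noncomputable def laguerreDeriv (f : ℝ → ℝ) : ℝ → ℝ :=
  fun x => deriv (fun y : ℝ => y * deriv f y) x

namespace ViskovAux

/-- Smoothness on `Ioi 0`. -/
def S (f : ℝ → ℝ) : Prop := ∀ x ∈ Ioi (0:ℝ), ContDiffAt ℝ (⊤ : ℕ∞) f x

lemma S.sderiv {f : ℝ → ℝ} (hf : S f) : S (deriv f) := by
  intro x hx
  have h := (hf x hx).fderiv_right (m := (⊤ : ℕ∞)) (by simp)
  have h2 : ContDiffAt ℝ (⊤ : ℕ∞) (fun y => fderiv ℝ f y 1) x := h.clm_apply contDiffAt_const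
  refine h2.congr_of_eventuallyEq ?_
  filter_upwards with y
  exact (fderiv_apply_one_eq_deriv).symm

lemma S.iter {f : ℝ → ℝ} (hf : S f) (n : ℕ) : S (deriv^[n] f) := by
  induction n with
  | zero => exact hf
  | succ n ih => rw [Function.iterate_succ_apply']; exact ih.sderiv

lemma S.diff {f : ℝ → ℝ} (hf : S f) {x : ℝ} (hx : x ∈ Ioi (0:ℝ)) :
    DifferentiableAt ℝ f x := (hf x hx).differentiableAt (by simp)

lemma eqOn_deriv {f g : ℝ → ℝ} (h : EqOn f g (Ioi (0:ℝ))) :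
    EqOn (deriv f) (deriv g) (Ioi (0:ℝ)) := by
  intro x hx
  exact Filter.EventuallyEq.deriv_eq
    ((isOpen_Ioi.eventually_mem hx).mono fun y hy => h hy)

lemma eqOn_deriv_iter {f g : ℝ → ℝ} (h : EqOn f g (Ioi (0:ℝ))) (n : ℕ) :
    EqOn (deriv^[n] f) (deriv^[n] g) (Ioi (0:ℝ)) := by
  induction n with
  | zero => exact h
  | succ n ih =>
    rw [Function.iterate_succ_apply', Function.iterate_succ_apply']
    exact eqOn_deriv ih

lemma S.mul_id {f : ℝ → ℝ} (hf : S f) : S (fun y => y * f y) := by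
  intro x hx
  exact contDiffAt_id.mul (hf x hx)

/-- One-step Leibniz: `D^[n+1] (x·g) = x·D^[n+1] g + (n+1)·D^[n] g` on `Ioi 0`. -/
lemma leibniz (n : ℕ) {g : ℝ → ℝ} (hg : S g) :
    EqOn (deriv^[n+1] (fun y => y * g y))
      (fun x => x * deriv^[n+1] g x + (n+1 : ℝ) * deriv^[n] g x) (Ioi (0:ℝ)) := by
  induction n with
  | zero =>
    intro x hx
    simp only [zero_add, Function.iterate_one, Function.iterate_zero, id_eq]
    rw [deriv_fun_mul differentiableAt_fun_id (hg.diff hx)]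
    simp [deriv_id'']
    ring
  | succ n ih =>
    intro x hx
    rw [Function.iterate_succ_apply']
    have h1 : deriv (deriv^[n+1] (fun y => y * g y)) x
        = deriv (fun y => y * deriv^[n+1] g y + (n+1 : ℝ) * deriv^[n] g y) x :=
      eqOn_deriv ih hx
    rw [h1]
    have hd1 : DifferentiableAt ℝ (fun y => y * deriv^[n+1] g y) x :=
      differentiableAt_fun_id.mul ((hg.iter (n+1)).diff hx)
    have hd2 : DifferentiableAt ℝ (fun y => (n+1 : ℝ) * deriv^[n] g y) x :=
      ((hg.iter n).diff hx).const_mul _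
    rw [deriv_fun_add hd1 hd2, deriv_fun_mul differentiableAt_fun_id ((hg.iter (n+1)).diff hx),
      deriv_const_mul _ ((hg.iter n).diff hx)]
    have e1 : deriv (deriv^[n+1] g) x = deriv^[n+2] g x :=
      congrFun (Function.iterate_succ_apply' deriv (n+1) g).symm x
    have e2 : deriv (deriv^[n] g) x = deriv^[n+1] g x :=
      congrFun (Function.iterate_succ_apply' deriv n g).symm x
    rw [e1, e2]
    simp [deriv_id'']
    ring

end ViskovAux

open ViskovAux in
theorem viskov_identity_beta (n : ℕ) (f : ℝ → ℝ)
    (hf : ∀ x ∈ Ioi (0:ℝ), ContDiffAt ℝ (⊤ : ℕ∞) f x) (x : ℝ) (hx : 0 < x) :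
    (laguerreDeriv^[n] f) x = deriv^[n] (fun y : ℝ => y ^ n * deriv^[n] f y) x := by
  induction n generalizing f x with
  | zero => simp
  | succ n ih =>
    have hf' : S f := hf
    have hL : S (laguerreDeriv f) := by
      have : S (fun y => y * deriv f y) := (hf'.sderiv).mul_id
      exact this.sderiv
    rw [Function.iterate_succ_apply]
    rw [ih (laguerreDeriv f) hL x hx]
    -- rewrite the inner function on Ioi 0
    have key : EqOn (fun y => y ^ n * deriv^[n] (laguerreDeriv f) y)
        (fun y => y ^ n * (y * deriv^[n+1] (deriv f) y + (n+1 : ℝ) * deriv^[n] (deriv f) y))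
        (Ioi (0:ℝ)) := by
      intro y hy
      have : deriv^[n] (laguerreDeriv f) y
          = deriv^[n+1] (fun z => z * deriv f z) y := by
        rw [Function.iterate_succ_apply]
        rfl
      simp only
      rw [this, leibniz n hf'.sderiv hy]
    -- and the target inner function, after one differentiation
    have key2 : EqOn (deriv (fun y : ℝ => y ^ (n+1) * deriv^[n+1] f y))
        (fun y => y ^ n * (y * deriv^[n+1] (deriv f) y + (n+1 : ℝ) * deriv^[n] (deriv f) y))
        (Ioi (0:ℝ)) := by
      intro y hy
      have hdp : DifferentiableAt ℝ (fun z : ℝ => z ^ (n+1)) y := by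
        exact differentiableAt_pow _
      rw [deriv_fun_mul hdp ((hf'.iter (n+1)).diff hy), deriv_pow_field]
      have e1 : deriv (deriv^[n+1] f) y = deriv^[n+1] (deriv f) y :=
        (congrFun (Function.iterate_succ_apply' deriv (n+1) f) y).symm.trans
          (congrFun (Function.iterate_succ_apply deriv (n+1) f) y)
      have e2 : deriv^[n+1] f y = deriv^[n] (deriv f) y :=
        congrFun (Function.iterate_succ_apply deriv n f) y
      rw [e1, e2]
      push_cast
      ring
    calc deriv^[n] (fun y => y ^ n * deriv^[n] (laguerreDeriv f) y) x
        = deriv^[n] (deriv (fun y : ℝ => y ^ (n+1) * deriv^[n+1] f y)) x :=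
          eqOn_deriv_iter (key.trans key2.symm) n hx
      _ = deriv^[n+1] (fun y : ℝ => y ^ (n+1) * deriv^[n+1] f y) x :=
          congrFun (Function.iterate_succ_apply deriv n _).symm x
end

section
/- Viskov-type identity for the companion operator: for every n ∈ ℕ and every smooth function f : (0,∞) → ℝ, applying n times the operator θ, where (θf)(x) = x · d/dx ( x · f(x) ), gives the same function as x ↦ x^n · d^n/dx^n ( x^n · f(x) ); that is, (x D x)^n f = x^n D^n x^n f, where D = d/dx. -/
open MeasureTheory Real Set
open scoped ContDiff

/-- The operator `θ f = x · D (x · f)`. -/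
noncomputable def thetaOp (f : ℝ → ℝ) : ℝ → ℝ :=
  fun x => x * deriv (fun y : ℝ => y * f y) x

private lemma iter_deriv_contDiffOn (g : ℝ → ℝ) (hg : ContDiffOn ℝ ∞ g (Ioi 0)) (k : ℕ) :
    ContDiffOn ℝ ∞ (deriv^[k] g) (Ioi 0) := by
  induction k with
  | zero => exact hg
  | succ k ih =>
    rw [Function.iterate_succ_apply']
    exact ((contDiffOn_infty_iff_deriv_of_isOpen isOpen_Ioi).1 ih).2

private lemma iter_deriv_diffAt (g : ℝ → ℝ) (hg : ContDiffOn ℝ ∞ g (Ioi 0)) (k : ℕ)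
    (x : ℝ) (hx : 0 < x) : DifferentiableAt ℝ (deriv^[k] g) x :=
  (((iter_deriv_contDiffOn g hg k).contDiffAt (Ioi_mem_nhds hx)).differentiableAt
    (by simp))

private lemma leibniz_mul_id (g : ℝ → ℝ) (hg : ContDiffOn ℝ ∞ g (Ioi 0)) (k : ℕ) :
    ∀ x ∈ Ioi (0:ℝ), deriv^[k+1] (fun y : ℝ => y * g y) x
      = x * deriv^[k+1] g x + (k+1 : ℝ) * deriv^[k] g x := by
  induction k with
  | zero =>
    intro x hx
    have hgx : DifferentiableAt ℝ g x := iter_deriv_diffAt g hg 0 x hx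
    rw [zero_add, Function.iterate_one, deriv_fun_mul differentiableAt_fun_id hgx]
    simp only [Function.iterate_zero, id_eq, deriv_id'', Nat.cast_zero, zero_add, one_mul]
    ring
  | succ k ih =>
    intro x hx
    have hev : deriv^[k+1] (fun y : ℝ => y * g y)
        =ᶠ[nhds x] fun y => y * deriv^[k+1] g y + (k+1 : ℝ) * deriv^[k] g y := by
      filter_upwards [Ioi_mem_nhds hx] with y hy using ih y hy
    rw [Function.iterate_succ_apply', hev.deriv_eq]
    have h1 : DifferentiableAt ℝ (deriv^[k+1] g) x := iter_deriv_diffAt g hg (k+1) x hx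
    have h0 : DifferentiableAt ℝ (deriv^[k] g) x := iter_deriv_diffAt g hg k x hx
    rw [deriv_fun_add (f := fun y => y * deriv^[k+1] g y) (differentiableAt_fun_id.mul h1) (h0.const_mul _),
      deriv_fun_mul differentiableAt_fun_id h1, deriv_const_mul _ h0, deriv_id'']
    have e1 : deriv (deriv^[k] g) x = deriv^[k+1] g x :=
      congrFun (Function.iterate_succ_apply' deriv k g).symm x
    have e2 : deriv (deriv^[k+1] g) x = deriv^[k+1+1] g x :=
      congrFun (Function.iterate_succ_apply' deriv (k+1) g).symm x
    rw [e1, e2]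
    push_cast
    ring

theorem viskov_identity_theta (n : ℕ) (f : ℝ → ℝ)
    (hf : ∀ x ∈ Ioi (0:ℝ), ContDiffAt ℝ (⊤ : ℕ∞) f x) (x : ℝ) (hx : 0 < x) :
    (thetaOp^[n] f) x = x ^ n * deriv^[n] (fun y : ℝ => y ^ n * f y) x := by
  have hf' : ContDiffOn ℝ ∞ f (Ioi 0) :=
    fun y hy => ((hf y hy).of_le (by simp)).contDiffWithinAt
  induction n generalizing x hx with
  | zero => simp
  | succ n ih =>
    have hg : ContDiffOn ℝ ∞ (fun y : ℝ => y ^ n * f y) (Ioi 0) :=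
      (contDiff_id.pow n).contDiffOn.mul hf'
    -- θ^[n] f agrees with the closed form on a nbhd of x
    have hev : thetaOp^[n] f =ᶠ[nhds x]
        fun y => y ^ n * deriv^[n] (fun z : ℝ => z ^ n * f z) y := by
      filter_upwards [Ioi_mem_nhds hx] with y hy using ih y hy
    rw [Function.iterate_succ_apply', thetaOp]
    have hev2 : (fun y : ℝ => y * thetaOp^[n] f y) =ᶠ[nhds x]
        fun y => y ^ (n+1) * deriv^[n] (fun z : ℝ => z ^ n * f z) y := by
      filter_upwards [hev] with y hy
      rw [hy]; ring
    rw [hev2.deriv_eq]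
    have hdn : DifferentiableAt ℝ (deriv^[n] fun z : ℝ => z ^ n * f z) x :=
      iter_deriv_diffAt _ hg n x hx
    rw [deriv_fun_mul (c := fun y : ℝ => y ^ (n+1)) (differentiableAt_fun_id.pow (n+1)) hdn, deriv_pow_field (n+1)]
    have key : deriv^[n+1] (fun y : ℝ => y ^ (n+1) * f y) x
        = x * deriv^[n+1] (fun z : ℝ => z ^ n * f z) x
          + (n+1 : ℝ) * deriv^[n] (fun z : ℝ => z ^ n * f z) x := by
      have : (fun y : ℝ => y ^ (n+1) * f y) = fun y : ℝ => y * (y ^ n * f y) := by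
        funext y; ring
      rw [this]
      exact leibniz_mul_id _ hg n x hx
    rw [key, ← Function.iterate_succ_apply' deriv]
    push_cast
    ring
end

section
/- Linear polynomial independence of the scaled Macdonald functions (Lemma 1): let ν ≥ 0 and let f and g be real polynomials. If f(x) ρ_ν(x) + g(x) ρ_{ν+1}(x) = 0 for all x > 0, then f is the zero polynomial and g is the zero polynomial. -/
/-!
Integrating `d/dt (t^μ e^(-t-x/t))` over `(0, ∞)` gives the recurrence
`ρ_(μ+1) = μ ρ_μ + x ρ_(μ-1)`, and Cauchy–Schwarz gives log-convexity in the order,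
`ρ_μ² ≤ ρ_(μ-1) ρ_(μ+1)`. Together they squeeze the ratio: `√x ≤ ρ_(ν+1)/ρ_ν ≤ ν + 1 + √x`
for `ν ≥ 0`. A relation `f ρ_ν + g ρ_(ν+1) = 0` therefore forces `f² ≍ x g²` as `x → ∞`, which
is impossible for nonzero `g` since `deg f²` is even and `deg (x g²)` is odd.
-/

open MeasureTheory Real Set

open Filter Topology Asymptotics
open scoped Nat

namespace Polynomial

variable {𝕜 : Type*} [NormedField 𝕜] [LinearOrder 𝕜] [IsStrictOrderedRing 𝕜] [OrderTopology 𝕜]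

theorem degree_le_of_isBigO_atTop {P Q : 𝕜[X]} (h : P.eval =O[atTop] Q.eval) :
    P.degree ≤ Q.degree := by
  by_cases hP : P = 0
  · simp [hP]
  by_contra! hlt
  refine isLittleO_irrefl' ?_ (h.trans_isLittleO (isLittleO_atTop_of_degree_lt _ _ hlt))
  exact (P.eventually_atTop_not_isRoot hP).frequently.mono fun x hx => norm_ne_zero_iff.2 hx

theorem degree_sq_ne_degree_X_mul_sq {R : Type*} [CommRing R] [IsDomain R]
    (f : R[X]) {g : R[X]} (hg : g ≠ 0) : (f ^ 2).degree ≠ (X * g ^ 2).degree := by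
  by_cases hf : f = 0
  · rw [hf, zero_pow two_ne_zero, degree_zero, ne_comm, Ne, degree_eq_bot]
    exact mul_ne_zero X_ne_zero (pow_ne_zero 2 hg)
  rw [degree_eq_natDegree (pow_ne_zero 2 hf),
    degree_eq_natDegree (mul_ne_zero X_ne_zero (pow_ne_zero 2 hg)), natDegree_pow,
    natDegree_mul X_ne_zero (pow_ne_zero 2 hg), natDegree_X, natDegree_pow]
  exact_mod_cast (by omega : 2 * f.natDegree ≠ 1 + 2 * g.natDegree)

end Polynomial

theorem rpow_mul_exp_neg_sub_div_le (μ : ℝ) {x t : ℝ} (hx : 0 < x) (ht : 0 < t) (n : ℕ) :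
    t ^ μ * exp (-t - x / t) ≤ n ! / x ^ n * (t ^ (μ + n) * exp (-t)) := by
  have hexp : exp (-(x / t)) ≤ n ! * (t / x) ^ n := by
    have := pow_div_factorial_le_exp _ (div_pos hx ht).le n
    rw [exp_neg, inv_le_comm₀ (exp_pos _) (by positivity)]
    calc (n ! * (t / x) ^ n)⁻¹ = (x / t) ^ n / n ! := by
          rw [div_pow, div_pow]; field_simp
      _ ≤ _ := this
  calc t ^ μ * exp (-t - x / t) = t ^ μ * exp (-t) * exp (-(x / t)) := by
        rw [sub_eq_add_neg, exp_add, mul_assoc]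
    _ ≤ t ^ μ * exp (-t) * (n ! * (t / x) ^ n) := by gcongr
    _ = n ! / x ^ n * (t ^ (μ + n) * exp (-t)) := by
        rw [rpow_add ht, rpow_natCast, div_pow]; field_simp

noncomputable def rhoIntegrand (ν x t : ℝ) : ℝ := t ^ (ν - 1) * exp (-t - x / t)

section rhoIntegrand

variable {ν x t : ℝ}

theorem rho_eq_integral_rhoIntegrand : rho ν x = ∫ t in Ioi 0, rhoIntegrand ν x t := rfl

theorem rhoIntegrand_pos (ht : 0 < t) : 0 < rhoIntegrand ν x t :=
  mul_pos (rpow_pos_of_pos ht _) (exp_pos _)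

theorem rhoIntegrand_add_one (ht : 0 < t) :
    rhoIntegrand (ν + 1) x t = t * rhoIntegrand ν x t := by
  simp only [rhoIntegrand, add_sub_cancel_right, rpow_sub_one ht.ne']
  field_simp

theorem integrableOn_rhoIntegrand (ν : ℝ) (hx : 0 < x) :
    IntegrableOn (rhoIntegrand ν x) (Ioi 0) := by
  obtain ⟨n, hn⟩ := exists_nat_gt (-ν)
  have hdom : IntegrableOn (fun t => n ! / x ^ n * (exp (-t) * t ^ (ν + n - 1))) (Ioi 0) :=
    (GammaIntegral_convergent (by linarith)).const_mul _
  refine hdom.mono' (by unfold rhoIntegrand; fun_prop) ?_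
  filter_upwards [self_mem_ae_restrict measurableSet_Ioi] with t (ht : 0 < t)
  rw [norm_of_nonneg (rhoIntegrand_pos ht).le, mul_comm (exp _), ← sub_add_eq_add_sub]
  exact rpow_mul_exp_neg_sub_div_le _ hx ht n

theorem rho_pos (ν : ℝ) (hx : 0 < x) : 0 < rho ν x := by
  rw [rho_eq_integral_rhoIntegrand, setIntegral_pos_iff_support_of_nonneg_ae
    (ae_restrict_of_forall_mem measurableSet_Ioi fun t ht => (rhoIntegrand_pos ht).le)
    (integrableOn_rhoIntegrand ν hx)]
  rw [inter_eq_right.2 (show Ioi 0 ⊆ Function.support (rhoIntegrand ν x) from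
    fun t ht => (rhoIntegrand_pos ht).ne'), volume_Ioi]
  exact ENNReal.zero_lt_top

end rhoIntegrand

section boundary

variable (μ : ℝ) {x : ℝ}

theorem tendsto_rpow_mul_exp_neg_sub_div_nhdsGT_zero (hx : 0 < x) :
    Tendsto (fun t => t ^ μ * exp (-t - x / t)) (𝓝[>] 0) (𝓝 0) := by
  obtain ⟨n, hn⟩ := exists_nat_gt (-μ)
  have hbound : Tendsto (fun t => n ! / x ^ n * (t ^ (μ + n) * exp (-t))) (𝓝[>] 0) (𝓝 0) := by
    have hcont : ContinuousAt (fun t => n ! / x ^ n * (t ^ (μ + n) * exp (-t))) 0 :=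
      continuousAt_const.mul ((continuousAt_rpow_const 0 _ (Or.inr (by linarith))).mul
        (continuous_exp.comp continuous_neg).continuousAt)
    simpa [zero_rpow (by linarith : μ + n ≠ 0)] using hcont.tendsto.mono_left nhdsWithin_le_nhds
  refine tendsto_of_tendsto_of_tendsto_of_le_of_le' tendsto_const_nhds hbound ?_ ?_ <;>
    filter_upwards [self_mem_nhdsWithin] with t (ht : 0 < t)
  · positivity
  · exact rpow_mul_exp_neg_sub_div_le μ hx ht n

theorem tendsto_rpow_mul_exp_neg_sub_div_atTop (hx : 0 ≤ x) :
    Tendsto (fun t => t ^ μ * exp (-t - x / t)) atTop (𝓝 0) := by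
  refine tendsto_of_tendsto_of_tendsto_of_le_of_le' tendsto_const_nhds
    (tendsto_rpow_mul_exp_neg_mul_atTop_nhds_zero μ 1 one_pos) ?_ ?_ <;>
    filter_upwards [eventually_gt_atTop 0] with t ht
  · positivity
  · gcongr
    have : 0 ≤ x / t := by positivity
    linarith

end boundary

theorem rho_add_one (μ : ℝ) {x : ℝ} (hx : 0 < x) :
    rho (μ + 1) x = μ * rho μ x + x * rho (μ - 1) x := by
  have hderiv : ∀ t ∈ Ioi (0 : ℝ), HasDerivAt (fun t => exp (-t - x / t))
      (exp (-t - x / t) * (-1 + x / t ^ 2)) t := by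
    intro t (ht : 0 < t)
    convert ((hasDerivAt_id t).neg.sub ((hasDerivAt_inv ht.ne').const_mul x)).exp using 1
    · ext s; simp [div_eq_mul_inv]
    · simp [div_eq_mul_inv]
  have hcombine : EqOn (fun t => μ * t ^ (μ - 1) * exp (-t - x / t)
        + t ^ μ * (exp (-t - x / t) * (-1 + x / t ^ 2)))
      (fun t => μ * rhoIntegrand μ x t - rhoIntegrand (μ + 1) x t
        + x * rhoIntegrand (μ - 1) x t) (Ioi 0) := by
    intro t (ht : 0 < t)
    simp only [rhoIntegrand, add_sub_cancel_right, rpow_sub_one ht.ne']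
    field_simp
    ring
  have hint : ∀ ν, IntegrableOn (rhoIntegrand ν x) (Ioi 0) :=
    fun ν => integrableOn_rhoIntegrand ν hx
  have hsum : IntegrableOn (fun t => μ * rhoIntegrand μ x t - rhoIntegrand (μ + 1) x t
      + x * rhoIntegrand (μ - 1) x t) (Ioi 0) :=
    (((hint μ).const_mul μ).sub (hint (μ + 1))).add ((hint (μ - 1)).const_mul x)
  have hparts := integral_Ioi_deriv_mul_eq_sub (u := fun t => t ^ μ)
    (fun t ht => hasDerivAt_rpow_const (Or.inl (ne_of_gt ht))) hderiv
    (hsum.congr_fun hcombine.symm measurableSet_Ioi)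
    (tendsto_rpow_mul_exp_neg_sub_div_nhdsGT_zero μ hx)
    (tendsto_rpow_mul_exp_neg_sub_div_atTop μ hx.le)
  rw [setIntegral_congr_fun measurableSet_Ioi hcombine, integral_add, integral_sub,
    integral_const_mul, integral_const_mul] at hparts
  · simp only [rho_eq_integral_rhoIntegrand]
    linarith
  · exact (hint μ).const_mul μ
  · exact hint (μ + 1)
  · exact ((hint μ).const_mul μ).sub (hint (μ + 1))
  · exact (hint (μ - 1)).const_mul x

theorem sq_rho_le_mul_rho (μ : ℝ) {x : ℝ} (hx : 0 < x) :
    rho μ x ^ 2 ≤ rho (μ - 1) x * rho (μ + 1) x := by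
  set a := rho (μ - 1) x
  set b := rho μ x
  have hint : ∀ ν, IntegrableOn (rhoIntegrand ν x) (Ioi 0) :=
    fun ν => integrableOn_rhoIntegrand ν hx
  -- Cauchy–Schwarz: this integral equals `a * (a * rho (μ + 1) x - b ^ 2)`.
  have hsquare : 0 ≤ ∫ t in Ioi 0, a ^ 2 * rhoIntegrand (μ + 1) x t
      - 2 * a * b * rhoIntegrand μ x t + b ^ 2 * rhoIntegrand (μ - 1) x t := by
    refine setIntegral_nonneg measurableSet_Ioi fun t (ht : 0 < t) => ?_
    have hμ : rhoIntegrand μ x t = t * rhoIntegrand (μ - 1) x t := by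
      rw [← rhoIntegrand_add_one ht, sub_add_cancel]
    rw [rhoIntegrand_add_one ht, hμ]
    calc (0 : ℝ) ≤ rhoIntegrand (μ - 1) x t * (a * t - b) ^ 2 :=
          mul_nonneg (rhoIntegrand_pos ht).le (sq_nonneg _)
      _ = _ := by ring
  rw [integral_add, integral_sub, integral_const_mul, integral_const_mul,
    integral_const_mul] at hsquare
  · simp only [← rho_eq_integral_rhoIntegrand] at hsquare
    nlinarith [rho_pos (μ - 1) hx]
  · exact (hint _).const_mul _
  · exact (hint _).const_mul _
  · exact ((hint _).const_mul _).sub ((hint _).const_mul _)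
  · exact (hint _).const_mul _

section bounds

variable {ν x : ℝ}

theorem mul_sq_rho_le_sq_rho_add_one (hν : 0 ≤ ν) (hx : 0 < x) :
    x * rho ν x ^ 2 ≤ rho (ν + 1) x ^ 2 := by
  have hrec : x * rho (ν - 1) x ≤ rho (ν + 1) x := by
    rw [rho_add_one ν hx]
    linarith [mul_nonneg hν (rho_pos ν hx).le]
  calc x * rho ν x ^ 2 ≤ x * (rho (ν - 1) x * rho (ν + 1) x) := by
        gcongr; exact sq_rho_le_mul_rho ν hx
    _ ≤ rho (ν + 1) x * rho (ν + 1) x := by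
        rw [← mul_assoc]; gcongr; exact (rho_pos _ hx).le
    _ = rho (ν + 1) x ^ 2 := (sq _).symm

theorem sq_rho_add_one_le (hx : 0 < x) :
    rho (ν + 1) x ^ 2 ≤ (ν + 1) * rho ν x * rho (ν + 1) x + x * rho ν x ^ 2 := by
  have hrec := rho_add_one (ν + 1) hx
  have hcs := sq_rho_le_mul_rho (ν + 1) hx
  rw [add_sub_cancel_right] at hrec hcs
  rw [hrec] at hcs
  linarith

theorem sq_bounds_of_mul_rho_add_mul_rho_eq_zero (hν : 0 ≤ ν) (hx : 0 < x) {a b : ℝ}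
    (h : a * rho ν x + b * rho (ν + 1) x = 0) :
    x * b ^ 2 ≤ a ^ 2 ∧ a ^ 2 ≤ ((ν + 1) ^ 2 + 2 * x) * b ^ 2 := by
  set w := rho ν x
  set w₁ := rho (ν + 1) x
  have hw : 0 < w ^ 2 := pow_pos (rho_pos ν hx) 2
  have hbw₁ : b * w₁ = -(a * w) := by linarith
  have hsq : b ^ 2 * w₁ ^ 2 = a ^ 2 * w ^ 2 := by
    rw [← mul_pow, ← mul_pow, hbw₁, neg_sq]
  constructor
  · refine le_of_mul_le_mul_right ?_ hw
    calc x * b ^ 2 * w ^ 2 = b ^ 2 * (x * w ^ 2) := by ring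
      _ ≤ b ^ 2 * w₁ ^ 2 := by gcongr; exact mul_sq_rho_le_sq_rho_add_one hν hx
      _ = a ^ 2 * w ^ 2 := hsq
  · have hab : a ^ 2 ≤ -((ν + 1) * a * b) + x * b ^ 2 := by
      refine le_of_mul_le_mul_right ?_ hw
      calc a ^ 2 * w ^ 2 = b ^ 2 * w₁ ^ 2 := hsq.symm
        _ ≤ b ^ 2 * ((ν + 1) * w * w₁ + x * w ^ 2) := by gcongr; exact sq_rho_add_one_le hx
        _ = (ν + 1) * w * b * (b * w₁) + x * b ^ 2 * w ^ 2 := by ring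
        _ = (-((ν + 1) * a * b) + x * b ^ 2) * w ^ 2 := by rw [hbw₁]; ring
    nlinarith [sq_nonneg (a + (ν + 1) * b)]

end bounds

open Polynomial in
theorem linear_polynomial_independence (ν : ℝ) (hν : 0 ≤ ν) (f g : Polynomial ℝ)
    (h : ∀ x : ℝ, 0 < x → f.eval x * rho ν x + g.eval x * rho (ν + 1) x = 0) :
    f = 0 ∧ g = 0 := by
  have hbounds := fun x (hx : 0 < x) => sq_bounds_of_mul_rho_add_mul_rho_eq_zero hν hx (h x hx)
  have hupper : (f ^ 2).eval =O[atTop] (X * g ^ 2).eval := by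
    refine IsBigO.of_bound 3 ?_
    filter_upwards [eventually_ge_atTop ((ν + 1) ^ 2), eventually_gt_atTop 0] with x hνx hx
    simp only [eval_pow, eval_mul, eval_X, norm_pow, norm_mul, norm_eq_abs, sq_abs,
      abs_of_pos hx]
    nlinarith [(hbounds x hx).2, sq_nonneg (g.eval x)]
  have hlower : (X * g ^ 2).eval =O[atTop] (f ^ 2).eval := by
    refine IsBigO.of_bound 1 ?_
    filter_upwards [eventually_gt_atTop 0] with x hx
    simp only [eval_pow, eval_mul, eval_X, norm_pow, norm_mul, norm_eq_abs, sq_abs,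
      abs_of_pos hx, one_mul]
    exact (hbounds x hx).1
  have hdeg := le_antisymm (degree_le_of_isBigO_atTop hupper) (degree_le_of_isBigO_atTop hlower)
  obtain rfl : g = 0 := by
    by_contra hg
    exact degree_sq_ne_degree_X_mul_sq f hg hdeg
  rw [zero_pow two_ne_zero, mul_zero, degree_zero, degree_eq_bot] at hdeg
  exact ⟨pow_eq_zero_iff two_ne_zero |>.1 hdeg, rfl⟩
end

section
/- Let ν ≥ 0 and α > −1. For every real polynomial p(x) = Σ_{j=0}^n a_j x^j, ∫₀^∞ p(x) x^α ρ_ν(x) dx = Γ(1+α) · ∫₀^∞ t^ν e^{-t} · (p(θ){t^α})(t) dt, where (p(θ){t^α})(t) = Σ_{j=0}^n a_j (1+α)_j t^{α+j}. -/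
/-!
Integrating in `x` first (Fubini–Tonelli, all integrands are positive), the `x`-integral of
`x ^ β e^(-x/t)` is `Γ(β+1) t^(β+1)`, so the moments of `ρ_ν` are
`∫₀^∞ x^β ρ_ν(x) dx = Γ(β+1) Γ(ν+β+1)`. Both sides of the identity are then the same linear
combination of these moments, since `Γ(1+α) (1+α)_j = Γ(1+α+j)`.
-/

open MeasureTheory Real Set

section ScaledGamma

variable {β t : ℝ}

lemma integrableOn_rpow_mul_exp_neg_div (hβ : -1 < β) (ht : 0 < t) :
    IntegrableOn (fun x : ℝ => x ^ β * exp (-(x / t))) (Ioi 0) := by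
  simpa [div_eq_inv_mul] using integrableOn_rpow_mul_exp_neg_mul_rpow hβ one_pos (inv_pos.2 ht)

lemma integral_rpow_mul_exp_neg_div (hβ : -1 < β) (ht : 0 < t) :
    ∫ x in Ioi 0, x ^ β * exp (-(x / t)) = Gamma (β + 1) * t ^ (β + 1) := by
  have := integral_rpow_mul_exp_neg_mul_Ioi (a := β + 1) (by linarith) (inv_pos.2 ht)
  simpa [div_eq_inv_mul, mul_comm] using this

lemma integrableOn_rpow_mul_exp_neg (hβ : -1 < β) :
    IntegrableOn (fun x : ℝ => x ^ β * exp (-x)) (Ioi 0) := by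
  simpa using integrableOn_rpow_mul_exp_neg_div hβ one_pos

lemma integral_rpow_mul_exp_neg (hβ : -1 < β) :
    ∫ x in Ioi 0, x ^ β * exp (-x) = Gamma (β + 1) := by
  simpa using integral_rpow_mul_exp_neg_div hβ one_pos

end ScaledGamma

lemma rpow_mul_rpow_mul_exp_neg_sub_div (ν β x t : ℝ) :
    x ^ β * (t ^ (ν - 1) * exp (-t - x / t))
      = t ^ (ν - 1) * exp (-t) * (x ^ β * exp (-(x / t))) := by
  rw [sub_eq_add_neg (-t), exp_add]; ring

lemma integral_rpow_mul_rpow_mul_exp_neg_sub_div (ν : ℝ) {β t : ℝ} (hβ : -1 < β) (ht : 0 < t) :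
    ∫ x in Ioi 0, x ^ β * (t ^ (ν - 1) * exp (-t - x / t))
      = Gamma (β + 1) * (t ^ (ν + β) * exp (-t)) := by
  simp_rw [rpow_mul_rpow_mul_exp_neg_sub_div]
  rw [integral_const_mul, integral_rpow_mul_exp_neg_div hβ ht,
    show ν + β = (ν - 1) + (β + 1) by ring, rpow_add ht (ν - 1) (β + 1)]
  ring

lemma integrable_rpow_mul_rpow_mul_exp_neg_sub_div {ν β : ℝ} (hβ : -1 < β) (hνβ : -1 < ν + β) :
    Integrable (fun p : ℝ × ℝ => p.1 ^ β * (p.2 ^ (ν - 1) * exp (-p.2 - p.1 / p.2)))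
      ((volume.restrict (Ioi 0)).prod (volume.restrict (Ioi 0))) := by
  refine (integrable_prod_iff' (by fun_prop)).2 ⟨?_, ?_⟩
  · filter_upwards [self_mem_ae_restrict measurableSet_Ioi] with t (ht : 0 < t)
    simp_rw [rpow_mul_rpow_mul_exp_neg_sub_div]
    exact (integrableOn_rpow_mul_exp_neg_div hβ ht).const_mul _
  · refine ((integrableOn_rpow_mul_exp_neg hνβ).const_mul (Gamma (β + 1))).congr ?_
    filter_upwards [self_mem_ae_restrict measurableSet_Ioi] with t (ht : 0 < t)
    rw [← integral_rpow_mul_rpow_mul_exp_neg_sub_div ν hβ ht]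
    refine setIntegral_congr_fun measurableSet_Ioi fun x (hx : 0 < x) => ?_
    exact (norm_of_nonneg (by positivity)).symm

lemma rpow_mul_rho (ν β x : ℝ) :
    x ^ β * rho ν x = ∫ t in Ioi 0, x ^ β * (t ^ (ν - 1) * exp (-t - x / t)) :=
  (integral_const_mul _ _).symm

lemma integrableOn_rpow_mul_rho {ν β : ℝ} (hβ : -1 < β) (hνβ : -1 < ν + β) :
    IntegrableOn (fun x => x ^ β * rho ν x) (Ioi 0) := by
  simp only [rpow_mul_rho]
  exact (integrable_rpow_mul_rpow_mul_exp_neg_sub_div hβ hνβ).integral_prod_left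

lemma integral_rpow_mul_rho {ν β : ℝ} (hβ : -1 < β) (hνβ : -1 < ν + β) :
    ∫ x in Ioi 0, x ^ β * rho ν x = Gamma (β + 1) * Gamma (ν + β + 1) := by
  simp_rw [rpow_mul_rho]
  rw [integral_integral_swap (integrable_rpow_mul_rpow_mul_exp_neg_sub_div hβ hνβ),
    setIntegral_congr_fun measurableSet_Ioi fun t (ht : 0 < t) =>
      integral_rpow_mul_rpow_mul_exp_neg_sub_div ν hβ ht,
    integral_const_mul, integral_rpow_mul_exp_neg hνβ]

lemma integral_finsetSum_const_mul {X ι : Type*} [MeasurableSpace X] {μ : Measure X}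
    (s : Finset ι) (c : ι → ℝ) {f : ι → X → ℝ} (hf : ∀ i ∈ s, Integrable (f i) μ) :
    ∫ x, ∑ i ∈ s, c i * f i x ∂μ = ∑ i ∈ s, c i * ∫ x, f i x ∂μ := by
  rw [integral_finsetSum s fun i hi => (hf i hi).const_mul (c i)]
  simp_rw [integral_const_mul]

theorem composition_integral_identity (ν α : ℝ) (hν : 0 ≤ ν) (hα : -1 < α)
    (n : ℕ) (a : ℕ → ℝ) :
    ∫ x in Ioi (0:ℝ), (∑ j ∈ Finset.range (n + 1), a j * x ^ j) * x ^ α * rho ν x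
      = Real.Gamma (1 + α) * ∫ t in Ioi (0:ℝ), t ^ ν * Real.exp (-t) *
          (∑ j ∈ Finset.range (n + 1),
            a j * (Real.Gamma (1 + α + j) / Real.Gamma (1 + α)) * t ^ (α + (j : ℝ))) := by
  have hβ (j : ℕ) : -1 < α + j := by linarith [j.cast_nonneg (α := ℝ)]
  have hνβ (j : ℕ) : -1 < ν + (α + j) := by linarith [hβ j]
  have lhs_integrand : ∀ x ∈ Ioi (0:ℝ),
      (∑ j ∈ Finset.range (n + 1), a j * x ^ j) * x ^ α * rho ν x
        = ∑ j ∈ Finset.range (n + 1), a j * (x ^ (α + j) * rho ν x) := by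
    intro x (hx : 0 < x)
    simp_rw [Finset.sum_mul, rpow_add hx, rpow_natCast]
    exact Finset.sum_congr rfl fun j _ => by ring
  have rhs_integrand : ∀ t ∈ Ioi (0:ℝ),
      t ^ ν * exp (-t) * ∑ j ∈ Finset.range (n + 1),
          a j * (Gamma (1 + α + j) / Gamma (1 + α)) * t ^ (α + (j : ℝ))
        = ∑ j ∈ Finset.range (n + 1),
          a j * (Gamma (1 + α + j) / Gamma (1 + α)) * (t ^ (ν + (α + j)) * exp (-t)) := by
    intro t (ht : 0 < t)
    simp_rw [Finset.mul_sum, rpow_add ht]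
    exact Finset.sum_congr rfl fun j _ => by ring
  rw [setIntegral_congr_fun measurableSet_Ioi lhs_integrand,
    setIntegral_congr_fun measurableSet_Ioi rhs_integrand,
    integral_finsetSum_const_mul _ _ fun j _ => integrableOn_rpow_mul_rho (hβ j) (hνβ j),
    integral_finsetSum_const_mul _ _ fun j _ => integrableOn_rpow_mul_exp_neg (hνβ j),
    Finset.mul_sum]
  refine Finset.sum_congr rfl fun j _ => ?_
  have hΓ : Gamma (1 + α) ≠ 0 := (Gamma_pos_of_pos (by linarith)).ne'
  rw [integral_rpow_mul_rho (hβ j) (hνβ j), integral_rpow_mul_exp_neg (hνβ j),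
    add_right_comm α, add_comm α 1]
  field_simp
end

section
/- Theorem 4: let k ∈ ℕ, ν ≥ 0, α > −1, and let (Q_n)_{n∈ℕ₀} be a sequence of real polynomials with deg Q_n = n. Then the orthogonality ∫₀^∞ Q_n(x) Q_m(x) ρ_{ν,k}(x) x^α dx = δ_{m,n} holds for all m, n ∈ ℕ₀ if and only if the composition orthogonality ∫₀^∞ ρ_{ν,k−1}(t) · ((Q_n · Q_m)(θ){t^α})(t) dt = δ_{m,n} / Γ(1+α) holds for all m, n ∈ ℕ₀. -/
/-!
Tonelli's theorem applied to the defining integral of `ρ_{ν,k+1}`, together with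
`∫₀^∞ x^β e^{-x/t} dx = Γ(β+1) t^{β+1}`, gives the moment recursion
`∫₀^∞ x^β ρ_{ν,k+1}(x) dx = Γ(β+1) ∫₀^∞ t^β ρ_{ν,k}(t) dt` for `β > -1`.
Expanding `p(x) x^α` into the monomials `x^{α+j}` turns it into
`∫₀^∞ p(x) ρ_{ν,k+1}(x) x^α dx = Γ(1+α) ∫₀^∞ ρ_{ν,k}(t) p(θ){t^α} dt`,
and applying this to `p = Q_n Q_m` shows that the two orthogonality relations are the same.
-/

open MeasureTheory Real Set

/-- The ultra-exponential weight functions: `ρ_{ν,0}(x) = x^ν e^{-x}` and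
`ρ_{ν,k+1}(x) = ∫₀^∞ e^{-x/t} ρ_{ν,k}(t) dt/t`. -/
noncomputable def rhoUE (ν : ℝ) : ℕ → ℝ → ℝ
  | 0 => fun x => x ^ ν * Real.exp (-x)
  | (k + 1) => fun x => ∫ t in Ioi (0:ℝ), Real.exp (-x / t) * rhoUE ν k t / t

/-- For a polynomial `p(x) = Σ_j a_j x^j`, the function `p(θ){t^α} = Σ_j a_j (1+α)_j t^{α+j}`,
where `(1+α)_j = Γ(1+α+j)/Γ(1+α)` is the Pochhammer symbol. -/
noncomputable def polyThetaApply (p : Polynomial ℝ) (α : ℝ) (t : ℝ) : ℝ :=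
  ∑ j ∈ Finset.range (p.natDegree + 1),
    p.coeff j * (Real.Gamma (1 + α + j) / Real.Gamma (1 + α)) * t ^ (α + (j : ℝ))

lemma measurable_rhoUE (ν : ℝ) : ∀ k, Measurable (rhoUE ν k)
  | 0 => by unfold rhoUE; fun_prop
  | k + 1 => by
    have := measurable_rhoUE ν k
    have h : Measurable fun z : ℝ × ℝ => Real.exp (-z.1 / z.2) * rhoUE ν k z.2 / z.2 := by
      fun_prop
    unfold rhoUE
    exact h.stronglyMeasurable.integral_prod_right'.measurable

lemma rhoUE_nonneg (ν : ℝ) : ∀ (k : ℕ) {x : ℝ}, 0 < x → 0 ≤ rhoUE ν k x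
  | 0, x, hx => by unfold rhoUE; positivity
  | k + 1, x, _ => by
    unfold rhoUE
    refine setIntegral_nonneg measurableSet_Ioi fun t (ht : 0 < t) => ?_
    have := rhoUE_nonneg ν k ht
    positivity

lemma exp_neg_div_div_le_inv {x t : ℝ} (hx : 0 < x) (ht : 0 < t) :
    Real.exp (-x / t) / t ≤ x⁻¹ := by
  have h : Real.exp (-x / t) * (x / t) ≤ 1 := by
    rw [neg_div, Real.exp_neg, inv_mul_le_iff₀ (Real.exp_pos _), mul_one]
    linarith [Real.add_one_le_exp (x / t)]
  calc Real.exp (-x / t) / t = Real.exp (-x / t) * (x / t) * x⁻¹ := by field_simp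
    _ ≤ 1 * x⁻¹ := by gcongr
    _ = x⁻¹ := one_mul _

lemma integrableOn_exp_neg_div_mul_rhoUE_div (ν : ℝ) (k : ℕ) {x : ℝ} (hx : 0 < x)
    (hρ : IntegrableOn (rhoUE ν k) (Ioi 0)) :
    IntegrableOn (fun t => Real.exp (-x / t) * rhoUE ν k t / t) (Ioi 0) := by
  have := measurable_rhoUE ν k
  refine (hρ.const_mul x⁻¹).mono' (by fun_prop : Measurable _).aestronglyMeasurable ?_
  filter_upwards [ae_restrict_mem measurableSet_Ioi] with t (ht : 0 < t)
  have hρt := rhoUE_nonneg ν k ht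
  rw [Real.norm_of_nonneg (by positivity), mul_div_right_comm]
  exact mul_le_mul_of_nonneg_right (exp_neg_div_div_le_inv hx ht) hρt

lemma lintegral_rpow_mul_exp_neg_div {β t : ℝ} (hβ : -1 < β) (ht : 0 < t) :
    ∫⁻ x in Ioi 0, ENNReal.ofReal (x ^ β * Real.exp (-x / t))
      = ENNReal.ofReal (Real.Gamma (β + 1) * t ^ (β + 1)) := by
  have hexp : ∀ x : ℝ, Real.exp (-t⁻¹ * x ^ (1 : ℝ)) = Real.exp (-x / t) := fun x => by
    rw [Real.rpow_one, neg_div, div_eq_inv_mul, neg_mul]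
  have hint := integrableOn_rpow_mul_exp_neg_mul_rpow hβ one_pos (inv_pos.mpr ht)
  have hval := integral_rpow_mul_exp_neg_mul_rpow one_pos hβ (inv_pos.mpr ht)
  simp only [hexp] at hint hval
  rw [← ofReal_integral_eq_lintegral_ofReal hint, hval, Real.inv_rpow ht.le,
    ← Real.rpow_neg ht.le]
  · norm_num [mul_comm]
  · filter_upwards [ae_restrict_mem measurableSet_Ioi] with x (hx : 0 < x)
    positivity

/-- In lower integrals Tonelli needs no integrability of the moments of `ρ_{ν,k}`. -/
lemma lintegral_rpow_mul_rhoUE_succ (ν : ℝ) (k : ℕ) {β : ℝ} (hβ : -1 < β)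
    (hρ : IntegrableOn (rhoUE ν k) (Ioi 0)) :
    ∫⁻ x in Ioi 0, ENNReal.ofReal (x ^ β * rhoUE ν (k + 1) x)
      = ENNReal.ofReal (Real.Gamma (β + 1))
          * ∫⁻ t in Ioi 0, ENNReal.ofReal (t ^ β * rhoUE ν k t) := by
  set F : ℝ → ℝ → ENNReal :=
    fun x t => ENNReal.ofReal (x ^ β * (Real.exp (-x / t) * rhoUE ν k t / t))
  have hρm := measurable_rhoUE ν k
  have hF : AEMeasurable (Function.uncurry F)
      ((volume.restrict (Ioi 0)).prod (volume.restrict (Ioi 0))) :=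
    (ENNReal.measurable_ofReal.comp (by fun_prop)).aemeasurable
  have inner_x : ∀ x ∈ Ioi (0 : ℝ),
      ENNReal.ofReal (x ^ β * rhoUE ν (k + 1) x) = ∫⁻ t in Ioi 0, F x t := by
    intro x (hx : 0 < x)
    rw [rhoUE, ← integral_const_mul]
    refine ofReal_integral_eq_lintegral_ofReal
      ((integrableOn_exp_neg_div_mul_rhoUE_div ν k hx hρ).const_mul _) ?_
    filter_upwards [ae_restrict_mem measurableSet_Ioi] with t (ht : 0 < t)
    have := rhoUE_nonneg ν k ht
    positivity
  have inner_t : ∀ t ∈ Ioi (0 : ℝ), ∫⁻ x in Ioi 0, F x t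
      = ENNReal.ofReal (Real.Gamma (β + 1)) * ENNReal.ofReal (t ^ β * rhoUE ν k t) := by
    intro t (ht : 0 < t)
    have hρt := rhoUE_nonneg ν k ht
    calc ∫⁻ x in Ioi 0, F x t
        = ∫⁻ x in Ioi 0, ENNReal.ofReal (x ^ β * Real.exp (-x / t))
            * ENNReal.ofReal (rhoUE ν k t / t) := by
          refine lintegral_congr fun x => ?_
          rw [← ENNReal.ofReal_mul' (by positivity)]
          exact congrArg ENNReal.ofReal (by ring)
      _ = ENNReal.ofReal (Real.Gamma (β + 1) * t ^ (β + 1) * (rhoUE ν k t / t)) := by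
          rw [lintegral_mul_const' _ _ ENNReal.ofReal_ne_top, lintegral_rpow_mul_exp_neg_div hβ ht,
            ← ENNReal.ofReal_mul' (by positivity)]
      _ = _ := by
          rw [← ENNReal.ofReal_mul (Real.Gamma_pos_of_pos (by linarith)).le,
            Real.rpow_add_one ht.ne']
          field_simp
  calc ∫⁻ x in Ioi 0, ENNReal.ofReal (x ^ β * rhoUE ν (k + 1) x)
      = ∫⁻ x in Ioi 0, ∫⁻ t in Ioi 0, F x t := setLIntegral_congr_fun measurableSet_Ioi inner_x
    _ = ∫⁻ t in Ioi 0, ∫⁻ x in Ioi 0, F x t := lintegral_lintegral_swap hF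
    _ = ∫⁻ t in Ioi 0, ENNReal.ofReal (Real.Gamma (β + 1))
          * ENNReal.ofReal (t ^ β * rhoUE ν k t) := setLIntegral_congr_fun measurableSet_Ioi inner_t
    _ = _ := lintegral_const_mul' _ _ ENNReal.ofReal_ne_top

lemma rpow_mul_rhoUE_nonneg_ae (ν β : ℝ) (k : ℕ) :
    0 ≤ᵐ[volume.restrict (Ioi 0)] fun x => x ^ β * rhoUE ν k x := by
  filter_upwards [ae_restrict_mem measurableSet_Ioi] with x (hx : 0 < x)
  have := rhoUE_nonneg ν k hx
  positivity

lemma integrableOn_rpow_mul_rhoUE_succ (ν : ℝ) (k : ℕ) {β : ℝ} (hβ : -1 < β)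
    (hρ : IntegrableOn (rhoUE ν k) (Ioi 0))
    (hmom : IntegrableOn (fun t => t ^ β * rhoUE ν k t) (Ioi 0)) :
    IntegrableOn (fun x => x ^ β * rhoUE ν (k + 1) x) (Ioi 0) := by
  have := measurable_rhoUE ν (k + 1)
  refine ⟨(by fun_prop : Measurable _).aestronglyMeasurable, ?_⟩
  rw [hasFiniteIntegral_iff_ofReal (rpow_mul_rhoUE_nonneg_ae ν β (k + 1)),
    lintegral_rpow_mul_rhoUE_succ ν k hβ hρ]
  exact ENNReal.mul_lt_top ENNReal.ofReal_lt_top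
    ((hasFiniteIntegral_iff_ofReal (rpow_mul_rhoUE_nonneg_ae ν β k)).mp hmom.2)

lemma integral_rpow_mul_rhoUE_succ (ν : ℝ) (k : ℕ) {β : ℝ} (hβ : -1 < β)
    (hρ : IntegrableOn (rhoUE ν k) (Ioi 0)) :
    ∫ x in Ioi 0, x ^ β * rhoUE ν (k + 1) x
      = Real.Gamma (β + 1) * ∫ t in Ioi 0, t ^ β * rhoUE ν k t := by
  have := measurable_rhoUE ν
  rw [integral_eq_lintegral_of_nonneg_ae (rpow_mul_rhoUE_nonneg_ae ν β (k + 1))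
      (by fun_prop : Measurable fun x => x ^ β * rhoUE ν (k + 1) x).aestronglyMeasurable,
    integral_eq_lintegral_of_nonneg_ae (rpow_mul_rhoUE_nonneg_ae ν β k)
      (by fun_prop : Measurable fun x => x ^ β * rhoUE ν k x).aestronglyMeasurable,
    lintegral_rpow_mul_rhoUE_succ ν k hβ hρ, ENNReal.toReal_mul,
    ENNReal.toReal_ofReal (Real.Gamma_pos_of_pos (by linarith)).le]

lemma integrableOn_rpow_mul_rhoUE {ν : ℝ} (hν : 0 ≤ ν) :
    ∀ (k : ℕ) {β : ℝ}, -1 < β → IntegrableOn (fun x => x ^ β * rhoUE ν k x) (Ioi 0)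
  | 0, β, hβ => by
    refine (integrableOn_rpow_mul_exp_neg_mul_rpow (by linarith : -1 < β + ν) one_pos one_pos
      ).congr_fun (fun x (hx : 0 < x) => ?_) measurableSet_Ioi
    simp only [rhoUE]
    rw [Real.rpow_one, neg_one_mul, Real.rpow_add hx, mul_assoc]
  | k + 1, β, hβ => by
    have hρ : IntegrableOn (rhoUE ν k) (Ioi 0) := by
      simpa using integrableOn_rpow_mul_rhoUE hν k (β := 0) (by norm_num)
    exact integrableOn_rpow_mul_rhoUE_succ ν k hβ hρ (integrableOn_rpow_mul_rhoUE hν k hβ)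

lemma integrableOn_rhoUE {ν : ℝ} (hν : 0 ≤ ν) (k : ℕ) : IntegrableOn (rhoUE ν k) (Ioi 0) := by
  simpa using integrableOn_rpow_mul_rhoUE hν k (β := 0) (by norm_num)

lemma integral_eval_mul_rhoUE_succ_mul_rpow {ν α : ℝ} (hν : 0 ≤ ν) (hα : -1 < α) (k : ℕ)
    (p : Polynomial ℝ) :
    ∫ x in Ioi 0, p.eval x * rhoUE ν (k + 1) x * x ^ α
      = Real.Gamma (1 + α) * ∫ t in Ioi 0, rhoUE ν k t * polyThetaApply p α t := by
  have hΓ : Real.Gamma (1 + α) ≠ 0 := (Real.Gamma_pos_of_pos (by linarith)).ne'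
  have hαj : ∀ j : ℕ, -1 < α + j := fun j => by linarith [j.cast_nonneg (α := ℝ)]
  have hmom : ∀ (k j : ℕ), IntegrableOn (fun x => x ^ (α + (j : ℝ)) * rhoUE ν k x) (Ioi 0) :=
    fun k j => integrableOn_rpow_mul_rhoUE hν k (hαj j)
  set d := p.natDegree
  calc ∫ x in Ioi 0, p.eval x * rhoUE ν (k + 1) x * x ^ α
      = ∫ x in Ioi 0, ∑ j ∈ Finset.range (d + 1),
          p.coeff j * (x ^ (α + (j : ℝ)) * rhoUE ν (k + 1) x) := by
        refine setIntegral_congr_fun measurableSet_Ioi fun x (hx : 0 < x) => ?_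
        simp only [Polynomial.eval_eq_sum_range, Finset.sum_mul, Real.rpow_add hx,
          Real.rpow_natCast]
        exact Finset.sum_congr rfl fun j _ => by ring
    _ = ∑ j ∈ Finset.range (d + 1),
          p.coeff j * ∫ x in Ioi 0, x ^ (α + (j : ℝ)) * rhoUE ν (k + 1) x := by
        rw [integral_finsetSum _ fun j _ => (hmom (k + 1) j).const_mul _]
        simp only [integral_const_mul]
    _ = ∑ j ∈ Finset.range (d + 1), Real.Gamma (1 + α) *
          (p.coeff j * (Real.Gamma (1 + α + j) / Real.Gamma (1 + α))
            * ∫ t in Ioi 0, t ^ (α + (j : ℝ)) * rhoUE ν k t) := by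
        refine Finset.sum_congr rfl fun j _ => ?_
        rw [integral_rpow_mul_rhoUE_succ ν k (hαj j) (integrableOn_rhoUE hν k),
          show α + j + 1 = 1 + α + j by ring]
        field_simp
    _ = Real.Gamma (1 + α) * ∫ t in Ioi 0, ∑ j ∈ Finset.range (d + 1),
          p.coeff j * (Real.Gamma (1 + α + j) / Real.Gamma (1 + α))
            * (t ^ (α + (j : ℝ)) * rhoUE ν k t) := by
        rw [integral_finsetSum _ fun j _ => (hmom k j).const_mul _, Finset.mul_sum]
        simp only [integral_const_mul]
    _ = Real.Gamma (1 + α) * ∫ t in Ioi 0, rhoUE ν k t * polyThetaApply p α t := by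
        congr 1
        refine setIntegral_congr_fun measurableSet_Ioi fun t _ => ?_
        rw [polyThetaApply, Finset.mul_sum]
        exact Finset.sum_congr rfl fun j _ => by ring

theorem ultraexponential_orthogonality_iff_composition_orthogonality_general
    (k : ℕ) (hk : 1 ≤ k) (ν α : ℝ) (hν : 0 ≤ ν) (hα : -1 < α)
    (Q : ℕ → Polynomial ℝ) :
    (∀ m n : ℕ,
        ∫ x in Ioi (0:ℝ), (Q n).eval x * (Q m).eval x * rhoUE ν k x * x ^ α
          = if m = n then 1 else 0)
      ↔ (∀ m n : ℕ,
        ∫ t in Ioi (0:ℝ), rhoUE ν (k - 1) t * polyThetaApply (Q n * Q m) α t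
          = (if m = n then 1 else 0) / Real.Gamma (1 + α)) := by
  obtain ⟨k, rfl⟩ := Nat.exists_eq_add_of_le' hk
  have hΓ : Real.Gamma (1 + α) ≠ 0 := (Real.Gamma_pos_of_pos (by linarith)).ne'
  refine forall₂_congr fun m n => ?_
  simp only [← Polynomial.eval_mul]
  rw [integral_eval_mul_rhoUE_succ_mul_rpow hν hα, Nat.add_sub_cancel, eq_div_iff hΓ, mul_comm]

theorem ultraexponential_orthogonality_iff_composition_orthogonality
    (k : ℕ) (hk : 1 ≤ k) (ν α : ℝ) (hν : 0 ≤ ν) (hα : -1 < α)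
    (Q : ℕ → Polynomial ℝ) (hdeg : ∀ n, (Q n).natDegree = n) :
    (∀ m n : ℕ,
        ∫ x in Ioi (0:ℝ), (Q n).eval x * (Q m).eval x * rhoUE ν k x * x ^ α
          = if m = n then 1 else 0)
      ↔ (∀ m n : ℕ,
        ∫ t in Ioi (0:ℝ), rhoUE ν (k - 1) t * polyThetaApply (Q n * Q m) α t
          = (if m = n then 1 else 0) / Real.Gamma (1 + α)) :=
  ultraexponential_orthogonality_iff_composition_orthogonality_general k hk ν α hν hα Q
end
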